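/- A matrix M = [m_{ij}] ∈ Mat_{m,n}(Z≥0) satisfies e_i^row(M) = ∅ for all 1 ≤ i ≤ m−1 and e_j^col(M) = ∅ for all 1 ≤ j ≤ n−1 (i.e., M is a highest-weight vertex of the full matrix bicrystal) if and only if there exist nonnegative integers a_1, …, a_{min(m,n)} such that m_{ij} = a_{i+j−1} whenever i+j−1 ≤ min(m,n), and m_{ij} = 0 whenever i+j−1 > min(m,n). In particular, each weight pair occurring for a highest-weight matrix satisfies: the row-sum sequence equals the column-sum sequence, and it is a partition with at most min(m,n) parts. -/

import Mathlib

namespace FilteredRSK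

/-! ## Words and crystal operators (via parenthesis matching) -/

/-- Scan the word `w`, treating each letter `i` as a `)` and each letter `i+1` as a `(`,
matching parentheses in the usual way.  Returns the pair consisting of the list of positions
of unmatched `)` (rightmost first) and the stack of positions of unmatched `(`
(most recent first, so the leftmost unmatched `(` is the last entry). -/
def bracketScan (i : ℕ) (w : List ℕ) : List ℕ × List ℕ :=
  (w.zipIdx.map Prod.swap).foldl
    (fun (st : List ℕ × List ℕ) (p : ℕ × ℕ) =>
      if p.2 = i + 1 then (st.1, p.1 :: st.2)
      else if p.2 = i then
        match st.2 with
        | [] => (p.1 :: st.1, [])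
        | _ :: rest => (st.1, rest)
      else st)
    ([], [])

/-- Position of the rightmost unmatched `)` of `bracket_i(w)`, if any. -/
def fPos (i : ℕ) (w : List ℕ) : Option ℕ := (bracketScan i w).1.head?

/-- Position of the leftmost unmatched `(` of `bracket_i(w)`, if any. -/
def ePos (i : ℕ) (w : List ℕ) : Option ℕ := (bracketScan i w).2.getLast?

/-- The crystal lowering operator `f_i`: change the letter `i` at the rightmost unmatched `)`
to `i+1`; output `∅` (i.e. `none`) if there is no unmatched `)`. -/
def fWord (i : ℕ) (w : List ℕ) : Option (List ℕ) := (fPos i w).map fun p => w.set p (i + 1)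

/-- The crystal raising operator `e_i`: change the letter `i+1` at the leftmost unmatched `(`
to `i`; output `∅` (i.e. `none`) if there is no unmatched `(`. -/
def eWord (i : ℕ) (w : List ℕ) : Option (List ℕ) := (ePos i w).map fun p => w.set p i

/-! ## Tableaux -/

/-- A tableau is a list of rows (top to bottom).  Its column reading word reads each column
bottom-to-top, columns left to right. -/
def readingWord (T : List (List ℕ)) : List ℕ :=
  (List.range (T.headD []).length).flatMap fun j => (T.filterMap fun row => row[j]?).reverse

/-- Semistandardness: all rows nonempty, rows weakly increase, row lengths weakly decrease,
and columns strictly increase. -/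
def IsSSYT (T : List (List ℕ)) : Prop :=
  (∀ row ∈ T, row ≠ []) ∧
  (∀ row ∈ T, row.Chain' (· ≤ ·)) ∧
  T.Chain' (fun row row' => row'.length ≤ row.length ∧
    ∀ j < row'.length, row.getD j 0 < row'.getD j 0)

/-- All entries of the tableau `T` lie in the interval `[a, b]`. -/
def entriesIn (T : List (List ℕ)) (a b : ℕ) : Prop := ∀ row ∈ T, ∀ x ∈ row, a ≤ x ∧ x ≤ b

/-- The shape of a tableau: the list of its row lengths. -/
def shape (T : List (List ℕ)) : List ℕ := T.map List.length

/-- A partition: a weakly decreasing list of positive integers. -/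
def IsPartition (lam : List ℕ) : Prop :=
  lam.Chain' (fun x y => y ≤ x) ∧ ∀ x ∈ lam, 0 < x

/-- Row insertion of `x` into a single row: replace the first entry strictly larger than `x`
(and bump it out), or append `x` at the end. -/
def insertRow (row : List ℕ) (x : ℕ) : List ℕ × Option ℕ :=
  match row.findIdx? (fun y => decide (x < y)) with
  | none => (row ++ [x], none)
  | some k => (row.set k x, row[k]?)

/-- Row insertion of a letter into a tableau. -/
def insertTab : List (List ℕ) → ℕ → List (List ℕ)
  | [], x => [[x]]
  | row :: rest, x =>
    match insertRow row x with
    | (row', none) => row' :: rest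
    | (row', some y) => row' :: insertTab rest y

/-- The insertion tableau of a word, obtained by successive row insertion of its letters. -/
def tabOf (w : List ℕ) : List (List ℕ) := w.foldl insertTab []

/-- The highest-weight tableau of shape `lam` with entries from `[a, b]`:
row `i` (0-indexed) is constantly filled with `a + i`. -/
def highestTab (lam : List ℕ) (a : ℕ) : List (List ℕ) :=
  lam.mapIdx fun i len => List.replicate len (a + i)

/-! ## Knuth equivalence -/

/-- Elementary Knuth moves. -/
inductive KnuthStep : List ℕ → List ℕ → Prop
  | yzx (u v : List ℕ) (x y z : ℕ) (h1 : x < y) (h2 : y ≤ z) :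
      KnuthStep (u ++ y :: z :: x :: v) (u ++ y :: x :: z :: v)
  | zxy (u v : List ℕ) (x y z : ℕ) (h1 : x ≤ y) (h2 : y < z) :
      KnuthStep (u ++ z :: x :: y :: v) (u ++ x :: z :: y :: v)

/-- Knuth equivalence: the equivalence relation generated by elementary Knuth moves. -/
def KnuthEquiv : List ℕ → List ℕ → Prop := Relation.EqvGen KnuthStep

/-- The Knuth equivalence class of a word. -/
def KClass (w : List ℕ) : Set (List ℕ) := {v | KnuthEquiv w v}

open Classical in
/-- A representative of a (nonempty) set of words. -/
noncomputable def classRep (C : Set (List ℕ)) : List ℕ :=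
  if h : C.Nonempty then h.some else []

/-- The weight of a Knuth class, defined via a representative. -/
noncomputable def classWt (C : Set (List ℕ)) : Multiset ℕ := ↑(classRep C)

/-- The insertion tableau of a Knuth class (as the reading word of the tableau),
defined via a representative. -/
noncomputable def classTab (C : Set (List ℕ)) : List ℕ := readingWord (tabOf (classRep C))

/-! ## Pre-crystal graphs -/

/-- A pre-crystal graph: a directed graph with edge labels in `L` and
vertex weights in `W`, together with a distinguished set of vertices. -/
structure PCG (V : Type*) (L : Type*) (W : Type*) where
  verts : Set V
  wt : V → W
  E : L → V → V → Prop

namespace PCG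

variable {V V' L L' W W' : Type*}

/-- Underlying undirected adjacency between vertices. -/
def Adj (G : PCG V L W) (u v : V) : Prop :=
  u ∈ G.verts ∧ v ∈ G.verts ∧ ∃ l, G.E l u v ∨ G.E l v u

/-- `u` and `v` lie in the same connected component. -/
def Reach (G : PCG V L W) : V → V → Prop := Relation.ReflTransGen G.Adj

/-- The connected component of `v` in `G`, as a pre-crystal graph. -/
def comp (G : PCG V L W) (v : V) : PCG V L W where
  verts := {u | u ∈ G.verts ∧ G.Reach v u}
  wt := G.wt
  E := G.E

/-- A pre-crystal graph homomorphism (with weights translated along `ω`):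
a vertex map preserving weights and labelled edges. -/
def IsHomVia (G : PCG V L W) (H : PCG V' L W') (ω : W → W') (f : V → V') : Prop :=
  (∀ v ∈ G.verts, f v ∈ H.verts) ∧
  (∀ v ∈ G.verts, H.wt (f v) = ω (G.wt v)) ∧
  (∀ (l : L), ∀ u ∈ G.verts, ∀ v ∈ G.verts, G.E l u v → H.E l (f u) (f v))

/-- A local isomorphism of pre-crystal graphs: a homomorphism whose restriction to each
connected component of `G` is an isomorphism onto a connected component of `H`. -/
def IsLocalIsoVia (G : PCG V L W) (H : PCG V' L W') (ω : W → W') (f : V → V') : Prop :=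
  IsHomVia G H ω f ∧
  (∀ u ∈ G.verts, ∀ v ∈ G.verts, G.Reach u v → f u = f v → u = v) ∧
  (∀ u ∈ G.verts, ∀ v' ∈ H.verts, H.Reach (f u) v' → ∃ v ∈ G.verts, G.Reach u v ∧ f v = v') ∧
  (∀ (l : L), ∀ u ∈ G.verts, ∀ v ∈ G.verts, G.Reach u v → H.E l (f u) (f v) → G.E l u v)

/-- An isomorphism of pre-crystal graphs. -/
def IsIsoVia (G : PCG V L W) (H : PCG V' L W') (ω : W → W') (f : V → V') : Prop :=
  IsHomVia G H ω f ∧ Set.BijOn f G.verts H.verts ∧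
  (∀ (l : L), ∀ u ∈ G.verts, ∀ v ∈ G.verts, H.E l (f u) (f v) → G.E l u v)

/-- Two pre-crystal graphs are isomorphic (with weights identified along `ω`). -/
def IsomorphicVia (G : PCG V L W) (H : PCG V' L W') (ω : W → W') : Prop :=
  ∃ f, IsIsoVia G H ω f

/-- The Cartesian product of two pre-crystal graphs; edge labels form the disjoint union
of the two label sets, and weights are concatenated. -/
def prod (G : PCG V L W) (H : PCG V' L' W') : PCG (V × V') (L ⊕ L') (W × W') where
  verts := {p | p.1 ∈ G.verts ∧ p.2 ∈ H.verts}
  wt := fun p => (G.wt p.1, H.wt p.2)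
  E := fun l p q =>
    match l with
    | Sum.inl a => G.E a p.1 q.1 ∧ p.2 = q.2
    | Sum.inr b => H.E b p.2 q.2 ∧ p.1 = q.1

/-- The Cartesian product of a finite family of pre-crystal graphs sharing a common ambient
label set (with disjoint effective labels, as for crystals of words on disjoint intervals):
an edge labelled `l` acts in a single coordinate and fixes all others. -/
def pi {r : ℕ} (G : Fin r → PCG V L W) : PCG (Fin r → V) L (Fin r → W) where
  verts := {p | ∀ k, p k ∈ (G k).verts}
  wt := fun p k => (G k).wt (p k)
  E := fun l p q => ∃ k, (G k).E l (p k) (q k) ∧ ∀ k', k' ≠ k → p k' = q k'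

end PCG

/-! ## Word, tableau and Knuth crystal graphs -/

/-- The word crystal graph `W_{[a,b]}`: vertices are the words on the alphabet `[a,b]`,
the weight of a word is its multiset of letters (recording the number of occurrences of
each letter), and there is an edge `w →ᵢ v` iff `v = f_i(w)` (for `a ≤ i < b`). -/
def WordGraph (a b : ℕ) : PCG (List ℕ) ℕ (Multiset ℕ) where
  verts := {w | ∀ x ∈ w, a ≤ x ∧ x ≤ b}
  wt := fun w => ↑w
  E := fun i u v => a ≤ i ∧ i < b ∧ fWord i u = some v

/-- The disjoint union `⊕_λ B_{λ,[a,b]}` of all tableau crystal graphs with entries in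
`[a,b]`: the induced subgraph of `W_{[a,b]}` on reading words of semistandard tableaux. -/
def TabWordGraph (a b : ℕ) : PCG (List ℕ) ℕ (Multiset ℕ) where
  verts := {w | ∃ T, IsSSYT T ∧ entriesIn T a b ∧ readingWord T = w}
  wt := fun w => ↑w
  E := fun i u v => a ≤ i ∧ i < b ∧ fWord i u = some v

/-- The tableau crystal graph `B_{λ,[a,b]}`: the induced subgraph of `W_{[a,b]}` on the
reading words of semistandard tableaux of shape `λ` with entries in `[a,b]`. -/
def BGraph (lam : List ℕ) (a b : ℕ) : PCG (List ℕ) ℕ (Multiset ℕ) where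
  verts := {w | ∃ T, IsSSYT T ∧ shape T = lam ∧ entriesIn T a b ∧ readingWord T = w}
  wt := fun w => ↑w
  E := fun i u v => a ≤ i ∧ i < b ∧ fWord i u = some v

/-- The Knuth crystal graph `K_{[a,b]}`: vertices are Knuth equivalence classes of words on
`[a,b]`, weights via representatives, with an edge `C →ᵢ C'` iff some representatives
`w ∈ C`, `w' ∈ C'` satisfy `w' = f_i(w)`. -/
noncomputable def KnuthGraph (a b : ℕ) : PCG (Set (List ℕ)) ℕ (Multiset ℕ) where
  verts := {C | ∃ w, (∀ x ∈ w, a ≤ x ∧ x ≤ b) ∧ C = KClass w}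
  wt := classWt
  E := fun i C C' => ∃ w ∈ C, ∃ w' ∈ C', a ≤ i ∧ i < b ∧ fWord i w = some w'

/-! ## Filtrations -/

/-- `ι` enumerates a filtration `0 = i₀ < i₁ < ⋯ < i_r = m` of `[0, m]`. -/
def IsFiltration (m : ℕ) {r : ℕ} (ι : Fin (r + 1) → ℕ) : Prop :=
  StrictMono ι ∧ ι 0 = 0 ∧ ι (Fin.last r) = m

/-- The subword of `w` consisting of all letters in the interval `[lo + 1, hi]`. -/
def blockFilter (lo hi : ℕ) (w : List ℕ) : List ℕ :=
  w.filter fun x => decide (lo + 1 ≤ x ∧ x ≤ hi)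

/-- The `I`-filtration of a word: the tuple of subwords on the letter intervals
`[i_{k-1}+1, i_k]`. -/
def filterWord {r : ℕ} (ι : Fin (r + 1) → ℕ) (w : List ℕ) : Fin r → List ℕ :=
  fun k => blockFilter (ι k.castSucc) (ι k.succ) w

/-- The canonical splitting of a weight (a multiset of letters) along the intervals of a
filtration. -/
def splitWt {r : ℕ} (ι : Fin (r + 1) → ℕ) (s : Multiset ℕ) : Fin r → Multiset ℕ :=
  fun k => s.filter fun x => ι k.castSucc + 1 ≤ x ∧ x ≤ ι k.succ

/-- The `I`-filtered word crystal graph `W^I_m`: the subgraph of `W_m = W_{[1,m]}` obtained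
by deleting all edges labelled by elements of `I`. -/
def FilteredWordGraph (m : ℕ) (I : Set ℕ) : PCG (List ℕ) ℕ (Multiset ℕ) where
  verts := {w | ∀ x ∈ w, 1 ≤ x ∧ x ≤ m}
  wt := fun w => ↑w
  E := fun i u v => i ∉ I ∧ 1 ≤ i ∧ i < m ∧ fWord i u = some v

/-- The `I`-filtered Knuth crystal graph `K^I_m`: the quotient of `W^I_m` by Knuth
equivalence. -/
noncomputable def FilteredKnuthGraph (m : ℕ) (I : Set ℕ) :
    PCG (Set (List ℕ)) ℕ (Multiset ℕ) where
  verts := {C | ∃ w, (∀ x ∈ w, 1 ≤ x ∧ x ≤ m) ∧ C = KClass w}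
  wt := classWt
  E := fun i C C' => i ∉ I ∧ ∃ w ∈ C, ∃ w' ∈ C', 1 ≤ i ∧ i < m ∧ fWord i w = some w'

/-- The product `W_{[1,i₁]} □ W_{[i₁+1,i₂]} □ ⋯ □ W_{[i_{r-1}+1,m]}`. -/
def WordPiGraph {r : ℕ} (ι : Fin (r + 1) → ℕ) :
    PCG (Fin r → List ℕ) ℕ (Fin r → Multiset ℕ) :=
  PCG.pi fun k => WordGraph (ι k.castSucc + 1) (ι k.succ)

/-- The product `K_{[1,i₁]} □ K_{[i₁+1,i₂]} □ ⋯ □ K_{[i_{r-1}+1,m]}`. -/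
noncomputable def KnuthPiGraph {r : ℕ} (ι : Fin (r + 1) → ℕ) :
    PCG (Fin r → Set (List ℕ)) ℕ (Fin r → Multiset ℕ) :=
  PCG.pi fun k => KnuthGraph (ι k.castSucc + 1) (ι k.succ)

/-- The disjoint union, over all `I`-filtered partition-tuples `λ`, of the filtered tableau
crystal graphs `B_{λ,m} = B_{λ⁽¹⁾,[1,i₁]} □ ⋯ □ B_{λ⁽ʳ⁾,[i_{r-1}+1,m]}`. -/
def TabPiGraph {r : ℕ} (ι : Fin (r + 1) → ℕ) :
    PCG (Fin r → List ℕ) ℕ (Fin r → Multiset ℕ) :=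
  PCG.pi fun k => TabWordGraph (ι k.castSucc + 1) (ι k.succ)

/-- The `I`-filtered tableau crystal graph `B_{λ,m}` of shape-tuple `λ`. -/
def BPiGraph {r : ℕ} (ι : Fin (r + 1) → ℕ) (lam : Fin r → List ℕ) :
    PCG (Fin r → List ℕ) ℕ (Fin r → Multiset ℕ) :=
  PCG.pi fun k => BGraph (lam k) (ι k.castSucc + 1) (ι k.succ)

/-- The map on Knuth classes induced by the `I`-filtration (via a representative). -/
noncomputable def classFilter {r : ℕ} (ι : Fin (r + 1) → ℕ) (C : Set (List ℕ)) :
    Fin r → Set (List ℕ) :=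
  fun k => KClass (filterWord ι (classRep C) k)

/-- An `I`-filtered partition-tuple: each `λ⁽ᵏ⁾` is a partition with at most
`i_k - i_{k-1}` rows. -/
def IsFilteredShape {r : ℕ} (ι : Fin (r + 1) → ℕ) (lam : Fin r → List ℕ) : Prop :=
  ∀ k, IsPartition (lam k) ∧ (lam k).length ≤ ι k.succ - ι k.castSucc

/-- The highest-weight tableau-tuple of shape-tuple `λ`: its `k`-th component is the
highest-weight tableau of shape `λ⁽ᵏ⁾` with entries from `[i_{k-1}+1, i_k]`. -/
def highestTabs {r : ℕ} (ι : Fin (r + 1) → ℕ) (lam : Fin r → List ℕ) :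
    Fin r → List (List ℕ) :=
  fun k => highestTab (lam k) (ι k.castSucc + 1)

/-! ## Matrices, row/column words and bicrystal operators -/

/-- The row word of a nonnegative integer matrix: record `M i j` copies of the (1-based) row
index `i + 1` for each entry, reading columns top-to-bottom, left to right. -/
def rowWord {m n : ℕ} (M : Matrix (Fin m) (Fin n) ℕ) : List ℕ :=
  (List.finRange n).flatMap fun j => (List.finRange m).flatMap fun i =>
    List.replicate (M i j) ((i : ℕ) + 1)

/-- The column word: record `M i j` copies of the (1-based) column index `j + 1` for each
entry, reading rows left-to-right, top to bottom. -/
def colWord {m n : ℕ} (M : Matrix (Fin m) (Fin n) ℕ) : List ℕ :=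
  (List.finRange m).flatMap fun i => (List.finRange n).flatMap fun j =>
    List.replicate (M i j) ((j : ℕ) + 1)

/-- The list of matrix cells producing the successive letters of `rowWord M`. -/
def rowCells {m n : ℕ} (M : Matrix (Fin m) (Fin n) ℕ) : List (Fin m × Fin n) :=
  (List.finRange n).flatMap fun j => (List.finRange m).flatMap fun i =>
    List.replicate (M i j) (i, j)

/-- The list of matrix cells producing the successive letters of `colWord M`. -/
def colCells {m n : ℕ} (M : Matrix (Fin m) (Fin n) ℕ) : List (Fin m × Fin n) :=
  (List.finRange m).flatMap fun i => (List.finRange n).flatMap fun j =>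
    List.replicate (M i j) (i, j)

/-- Subtract `1` at the cell `c` and add `1` at the cell directly below. -/
def shiftDown {m n : ℕ} (M : Matrix (Fin m) (Fin n) ℕ) (c : Fin m × Fin n) :
    Matrix (Fin m) (Fin n) ℕ := fun a b =>
  if a = c.1 ∧ b = c.2 then M a b - 1
  else if (a : ℕ) = (c.1 : ℕ) + 1 ∧ b = c.2 then M a b + 1
  else M a b

/-- Subtract `1` at the cell `c` and add `1` at the cell directly above. -/
def shiftUp {m n : ℕ} (M : Matrix (Fin m) (Fin n) ℕ) (c : Fin m × Fin n) :
    Matrix (Fin m) (Fin n) ℕ := fun a b =>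
  if a = c.1 ∧ b = c.2 then M a b - 1
  else if (a : ℕ) + 1 = (c.1 : ℕ) ∧ b = c.2 then M a b + 1
  else M a b

/-- Subtract `1` at the cell `c` and add `1` at the cell directly to the right. -/
def shiftRight {m n : ℕ} (M : Matrix (Fin m) (Fin n) ℕ) (c : Fin m × Fin n) :
    Matrix (Fin m) (Fin n) ℕ := fun a b =>
  if a = c.1 ∧ b = c.2 then M a b - 1
  else if a = c.1 ∧ (b : ℕ) = (c.2 : ℕ) + 1 then M a b + 1
  else M a b

/-- Subtract `1` at the cell `c` and add `1` at the cell directly to the left. -/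
def shiftLeft {m n : ℕ} (M : Matrix (Fin m) (Fin n) ℕ) (c : Fin m × Fin n) :
    Matrix (Fin m) (Fin n) ℕ := fun a b =>
  if a = c.1 ∧ b = c.2 then M a b - 1
  else if a = c.1 ∧ (b : ℕ) + 1 = (c.2 : ℕ) then M a b + 1
  else M a b

/-- The row bicrystal lowering operator `f_i^row`, transporting `f_i` through `rowWord`. -/
def fRow {m n : ℕ} (i : ℕ) (M : Matrix (Fin m) (Fin n) ℕ) :
    Option (Matrix (Fin m) (Fin n) ℕ) :=
  (fPos i (rowWord M)).bind fun p => ((rowCells M)[p]?).map fun c => shiftDown M c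

/-- The row bicrystal raising operator `e_i^row`, transporting `e_i` through `rowWord`. -/
def eRow {m n : ℕ} (i : ℕ) (M : Matrix (Fin m) (Fin n) ℕ) :
    Option (Matrix (Fin m) (Fin n) ℕ) :=
  (ePos i (rowWord M)).bind fun p => ((rowCells M)[p]?).map fun c => shiftUp M c

/-- The column bicrystal lowering operator `f_j^col`, transporting `f_j` through `colWord`. -/
def fCol {m n : ℕ} (j : ℕ) (M : Matrix (Fin m) (Fin n) ℕ) :
    Option (Matrix (Fin m) (Fin n) ℕ) :=
  (fPos j (colWord M)).bind fun p => ((colCells M)[p]?).map fun c => shiftRight M c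

/-- The column bicrystal raising operator `e_j^col`, transporting `e_j` through `colWord`. -/
def eCol {m n : ℕ} (j : ℕ) (M : Matrix (Fin m) (Fin n) ℕ) :
    Option (Matrix (Fin m) (Fin n) ℕ) :=
  (ePos j (colWord M)).bind fun p => ((colCells M)[p]?).map fun c => shiftLeft M c

/-- The pre-crystal graph `M^row_{m,n}`: vertices are all matrices in `Mat_{m,n}(ℤ≥0)`,
weights are row-sums (the weight of the row word), edges `M →ᵢ f_i^row(M)`. -/
def MRowGraph (m n : ℕ) : PCG (Matrix (Fin m) (Fin n) ℕ) ℕ (Multiset ℕ) where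
  verts := Set.univ
  wt := fun M => ↑(rowWord M)
  E := fun i M M' => 1 ≤ i ∧ i < m ∧ fRow i M = some M'

/-- The pre-crystal graph `M^col_{m,n}`. -/
def MColGraph (m n : ℕ) : PCG (Matrix (Fin m) (Fin n) ℕ) ℕ (Multiset ℕ) where
  verts := Set.univ
  wt := fun M => ↑(colWord M)
  E := fun j M M' => 1 ≤ j ∧ j < n ∧ fCol j M = some M'

/-- The matrix bicrystal graph `M_{m,n}`, with edges labelled `i^row` (`Sum.inl i`) and
`j^col` (`Sum.inr j`), and weight the pair (row-sum tuple, column-sum tuple). -/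
def MatGraph (m n : ℕ) :
    PCG (Matrix (Fin m) (Fin n) ℕ) (ℕ ⊕ ℕ) (Multiset ℕ × Multiset ℕ) where
  verts := Set.univ
  wt := fun M => (↑(rowWord M), ↑(colWord M))
  E := fun l M M' =>
    match l with
    | Sum.inl i => 1 ≤ i ∧ i < m ∧ fRow i M = some M'
    | Sum.inr j => 1 ≤ j ∧ j < n ∧ fCol j M = some M'

/-- The `(I|J)`-filtered matrix bicrystal graph `M^{I|J}_{m,n}`: delete the edges labelled
`i^row` with `i ∈ I` and `j^col` with `j ∈ J`. -/
def FilteredMatGraph (m n : ℕ) (I J : Set ℕ) :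
    PCG (Matrix (Fin m) (Fin n) ℕ) (ℕ ⊕ ℕ) (Multiset ℕ × Multiset ℕ) where
  verts := Set.univ
  wt := fun M => (↑(rowWord M), ↑(colWord M))
  E := fun l M M' =>
    match l with
    | Sum.inl i => i ∉ I ∧ 1 ≤ i ∧ i < m ∧ fRow i M = some M'
    | Sum.inr j => j ∉ J ∧ 1 ≤ j ∧ j < n ∧ fCol j M = some M'

/-- `filterRSK_{I|J}` at the level of reading words: apply the insertion tableau map to each
component of the filtrations of the row and column words, recording reading words. -/
def filterRSKw {m n r s : ℕ} (ι : Fin (r + 1) → ℕ) (κ : Fin (s + 1) → ℕ)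
    (M : Matrix (Fin m) (Fin n) ℕ) : (Fin r → List ℕ) × (Fin s → List ℕ) :=
  (fun k => readingWord (tabOf (filterWord ι (rowWord M) k)),
   fun k => readingWord (tabOf (filterWord κ (colWord M) k)))

/-- `filterRSK_{I|J}` at the level of tableaux. -/
def filterRSKt {m n r s : ℕ} (ι : Fin (r + 1) → ℕ) (κ : Fin (s + 1) → ℕ)
    (M : Matrix (Fin m) (Fin n) ℕ) :
    (Fin r → List (List ℕ)) × (Fin s → List (List ℕ)) :=
  (fun k => tabOf (filterWord ι (rowWord M) k),
   fun k => tabOf (filterWord κ (colWord M) k))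

/-- A matrix is a highest-weight vertex of `M^{I|J}_{m,n}`:
`e_i^row(M) = ∅` for all `i ∉ I` and `e_j^col(M) = ∅` for all `j ∉ J`. -/
def MatHighest {m n : ℕ} (I J : Set ℕ) (M : Matrix (Fin m) (Fin n) ℕ) : Prop :=
  (∀ i, 1 ≤ i → i < m → i ∉ I → eRow i M = none) ∧
  (∀ j, 1 ≤ j → j < n → j ∉ J → eCol j M = none)

/-- A set of matrices is `(I|J)`-bicrystal closed if it is closed under the bicrystal
operators `e_i^row, f_i^row` (`i ∉ I`) and `e_j^col, f_j^col` (`j ∉ J`). -/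
def BicrystalClosed {m n : ℕ} (I J : Set ℕ) (S : Set (Matrix (Fin m) (Fin n) ℕ)) : Prop :=
  ∀ M ∈ S,
    (∀ i, 1 ≤ i → i < m → i ∉ I →
      (∀ N, fRow i M = some N → N ∈ S) ∧ (∀ N, eRow i M = some N → N ∈ S)) ∧
    (∀ j, 1 ≤ j → j < n → j ∉ J →
      (∀ N, fCol j M = some N → N ∈ S) ∧ (∀ N, eCol j M = some N → N ∈ S))

/-- The induced pre-crystal subgraph of `M^{I|J}_{m,n}` on a set `S` of matrices. -/
def inducedMatGraph (m n : ℕ) (I J : Set ℕ) (S : Set (Matrix (Fin m) (Fin n) ℕ)) :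
    PCG (Matrix (Fin m) (Fin n) ℕ) (ℕ ⊕ ℕ) (Multiset ℕ × Multiset ℕ) where
  verts := S
  wt := fun M => (↑(rowWord M), ↑(colWord M))
  E := (FilteredMatGraph m n I J).E

/-- The disjoint union, over the highest-weight matrices `M₀ ∈ S` (hence with multiplicity
`c_{λ|μ}` for each filtered partition-tuple `(λ|μ)`), of copies of `B_{λ,m} □ B_{μ,n}` where
`(λ|μ)` is the shape of `filterRSK_{I|J}(M₀)`. -/
def sumCopiesGraph {m n : ℕ} {r s : ℕ} (ι : Fin (r + 1) → ℕ) (κ : Fin (s + 1) → ℕ)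
    (S : Set (Matrix (Fin m) (Fin n) ℕ)) :
    PCG (Matrix (Fin m) (Fin n) ℕ × ((Fin r → List ℕ) × (Fin s → List ℕ))) (ℕ ⊕ ℕ)
      ((Fin r → Multiset ℕ) × (Fin s → Multiset ℕ)) where
  verts := {Mp | Mp.1 ∈ S ∧ MatHighest (Set.range ι) (Set.range κ) Mp.1 ∧
    ∃ lam mu, IsFilteredShape ι lam ∧ IsFilteredShape κ mu ∧
      filterRSKt ι κ Mp.1 = (highestTabs ι lam, highestTabs κ mu) ∧
      Mp.2 ∈ (PCG.prod (BPiGraph ι lam) (BPiGraph κ mu)).verts}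
  wt := fun Mp => (PCG.prod (TabPiGraph ι) (TabPiGraph κ)).wt Mp.2
  E := fun l Mp Mq =>
    Mp.1 = Mq.1 ∧ (PCG.prod (TabPiGraph ι) (TabPiGraph κ)).E l Mp.2 Mq.2

/-! ## 1-based matrix entries and shape vectors -/

/-- The `(i,j)` entry of `M` in 1-based coordinates, with the convention that entries outside
the matrix are `0`. -/
def ent {m n : ℕ} (M : Matrix (Fin m) (Fin n) ℕ) (i j : ℕ) : ℕ :=
  if h : 1 ≤ i ∧ i ≤ m ∧ 1 ≤ j ∧ j ≤ n then M ⟨i - 1, by omega⟩ ⟨j - 1, by omega⟩ else 0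

/-- The partition `(lam (lo+1), lam (lo+2), …, lam (lo+size))` with trailing zero parts
removed: the shape of the block of a filtered partition-tuple written as an integer vector. -/
def blockShape (lam : ℕ → ℕ) (lo size : ℕ) : List ℕ :=
  ((List.range size).map fun t => lam (lo + t + 1)).filter fun x => decide (0 < x)

/-- The highest-weight tableau-tuple of the filtered partition-tuple written as an integer
vector `lam : ℕ → ℕ` (1-based). -/
def highestFromVec {r : ℕ} (ι : Fin (r + 1) → ℕ) (lam : ℕ → ℕ) : Fin r → List (List ℕ) :=
  fun k => highestTab (blockShape lam (ι k.castSucc) (ι k.succ - ι k.castSucc))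
    (ι k.castSucc + 1)

/-! ## Partial permutations and matrix Schubert combinatorics -/

/-- A partial permutation: at most one `1` in each row and column; encoded as an injective
partial function from rows to columns (`none` encodes `∞`). -/
def IsPartialPerm {m n : ℕ} (w : Fin m → Option (Fin n)) : Prop :=
  ∀ a a' b, w a = some b → w a' = some b → a = a'

/-- The cell `(i, j)` lies in the Rothe diagram `D(w)`: it is not weakly below nor weakly
right of a dot of the partial permutation matrix. -/
def InD {m n : ℕ} (w : Fin m → Option (Fin n)) (i : Fin m) (j : Fin n) : Prop :=
  (∀ b, w i = some b → (j : ℕ) < (b : ℕ)) ∧ (∀ a, a ≤ i → w a ≠ some j)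

/-- The row descent positions of `w` (1-based): rows `i` such that the rightmost box of
`D(w)` in row `i` is strictly right of the rightmost box in row `i + 1`. -/
def DescRow {m n : ℕ} (w : Fin m → Option (Fin n)) : Set ℕ :=
  {i | ∃ (h1 : 1 ≤ i) (h2 : i < m), ∃ j : Fin n,
    InD w ⟨i - 1, by omega⟩ j ∧ ∀ j' : Fin n, InD w ⟨i, h2⟩ j' → (j' : ℕ) < (j : ℕ)}

/-- The column descent positions of `w` (1-based). -/
def DescCol {m n : ℕ} (w : Fin m → Option (Fin n)) : Set ℕ :=
  {j | ∃ (h1 : 1 ≤ j) (h2 : j < n), ∃ i : Fin m,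
    InD w i ⟨j - 1, by omega⟩ ∧ ∀ i' : Fin m, InD w i' ⟨j, h2⟩ → (i' : ℕ) < (i : ℕ)}

/-- The rank function `r_w(i,j)`: the rank of the northwest `i × j` submatrix of the partial
permutation matrix, i.e. the number of dots in that submatrix. -/
noncomputable def rankFn {m n : ℕ} (w : Fin m → Option (Fin n)) (i j : ℕ) : ℕ :=
  Set.ncard {a : Fin m | (a : ℕ) < i ∧ ∃ b : Fin n, w a = some b ∧ (b : ℕ) < j}

/-- The matrix Schubert variety `X_w ⊆ Mat_{m,n}(ℂ)`: matrices whose northwest `i × j`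
submatrices have rank at most `r_w(i,j)`. -/
def XSchubert {m n : ℕ} (w : Fin m → Option (Fin n)) : Set (Matrix (Fin m) (Fin n) ℂ) :=
  {A | ∀ (i : ℕ) (hi : i ≤ m) (j : ℕ) (hj : j ≤ n),
    (A.submatrix (Fin.castLE hi) (Fin.castLE hj)).rank ≤ rankFn w i j}

/-- `g` is block-diagonal with diagonal blocks of sizes `i₁ - i₀, …, i_r - i_{r-1}`. -/
def IsBlockDiag {m : ℕ} {r : ℕ} (ι : Fin (r + 1) → ℕ) (g : Matrix (Fin m) (Fin m) ℂ) :
    Prop :=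
  ∀ a b : Fin m,
    (¬ ∃ k : Fin r, ι k.castSucc ≤ (a : ℕ) ∧ (a : ℕ) < ι k.succ ∧
        ι k.castSucc ≤ (b : ℕ) ∧ (b : ℕ) < ι k.succ) → g a b = 0

/-- `(p, q)` (0-based) is a cell of the essential set `E(w)`. -/
def EssCell {m n : ℕ} (w : Fin m → Option (Fin n)) (p : Fin m) (q : Fin n) : Prop :=
  InD w p q ∧ (∀ hq : (q : ℕ) + 1 < n, ¬ InD w p ⟨(q : ℕ) + 1, hq⟩) ∧
    (∀ hp : (p : ℕ) + 1 < m, ¬ InD w ⟨(p : ℕ) + 1, hp⟩ q)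

/-- `N` carries an antidiagonal of some Fulton generator of the Schubert determinantal ideal
of `w`: there are an essential cell `(p,q)`, `t = r_w(p,q) + 1` rows `r₁ < ⋯ < r_t ≤ p` and
columns `c₁ < ⋯ < c_t ≤ q` with `N_{r_s, c_{t+1-s}} ≥ 1` for all `s`. -/
def CarriesAntidiag {m n : ℕ} (w : Fin m → Option (Fin n))
    (N : Matrix (Fin m) (Fin n) ℕ) : Prop :=
  ∃ (p : Fin m) (q : Fin n), EssCell w p q ∧
    ∃ (rr : Fin (rankFn w ((p : ℕ) + 1) ((q : ℕ) + 1) + 1) → Fin m)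
      (cc : Fin (rankFn w ((p : ℕ) + 1) ((q : ℕ) + 1) + 1) → Fin n),
      StrictMono rr ∧ StrictMono cc ∧ (∀ t, rr t ≤ p) ∧ (∀ t, cc t ≤ q) ∧
      ∀ t, 1 ≤ N (rr t) (cc t.rev)

/-!
`e_i w = ∅` exactly when every `(` of `bracket_i(w)` is matched. In the row word, column `j`
contributes its row-`i` entries as `)` followed by its row-`(i+1)` entries as `(`, so
`e_i^row M = ∅` says that for every `j` the entries of row `i + 1` in columns `≥ j` add up to
at most the entries of row `i` in columns `> j`; the column condition is the same statement
for `Mᵀ`.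

Summing the row inequalities over all rows below `i` gives `Q(i+1, j) ≤ Q(i, j+1)` for the
quadrant sums `Q(i, j) = ∑_{a ≥ i, b ≥ j} m_{ab}`, and the column inequalities give the reverse.
Hence `Q(i+1, j) = Q(i, j+1)`, and by inclusion–exclusion `m_{i+1,j} = m_{i,j+1}`: `M` is
constant along antidiagonals, and since the entries vanish outside the matrix they vanish
beyond the `min(m,n)`-th antidiagonal. Conversely, for such `M` all the inequalities are
equalities. Row and column sums are then both tail sums of the antidiagonal sequence.
-/

open Finset Matrix

/-- `c` counts the unmatched `(` read so far; a `)` read when `c = 0` stays unmatched, whence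
the truncated subtraction. -/
def unmatchedStep (i c x : ℕ) : ℕ := if x = i + 1 then c + 1 else if x = i then c - 1 else c

def bracketStep (i : ℕ) (st : List ℕ × List ℕ) (p : ℕ × ℕ) : List ℕ × List ℕ :=
  if p.2 = i + 1 then (st.1, p.1 :: st.2)
  else if p.2 = i then
    match st.2 with
    | [] => (p.1 :: st.1, [])
    | _ :: rest => (st.1, rest)
  else st

lemma bracketScan_eq_foldl (i : ℕ) (w : List ℕ) :
    bracketScan i w = (w.zipIdx.map Prod.swap).foldl (bracketStep i) ([], []) := rfl

lemma length_foldl_bracketStep (i : ℕ) :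
    ∀ (l : List (ℕ × ℕ)) (st : List ℕ × List ℕ),
      (l.foldl (bracketStep i) st).2.length =
        (l.map Prod.snd).foldl (unmatchedStep i) st.2.length
  | [], _ => rfl
  | p :: l, st => by
    rw [List.foldl_cons, List.map_cons, List.foldl_cons, length_foldl_bracketStep i l]
    congr 1
    unfold bracketStep unmatchedStep
    split_ifs <;> rcases st.2 <;> simp_all

lemma mem_bracketStep {i x : ℕ} {st : List ℕ × List ℕ} {p : ℕ × ℕ}
    (h : x ∈ (bracketStep i st p).2) : x = p.1 ∨ x ∈ st.2 := by
  obtain ⟨s₁, s₂⟩ := st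
  unfold bracketStep at h
  split_ifs at h
  · exact List.mem_cons.mp h
  · cases s₂ <;> simp_all
  · exact Or.inr h

lemma mem_foldl_bracketStep (i : ℕ) :
    ∀ (l : List (ℕ × ℕ)) (st : List ℕ × List ℕ) {x : ℕ},
      x ∈ (l.foldl (bracketStep i) st).2 → x ∈ st.2 ∨ x ∈ l.map Prod.fst
  | [], _, _, h => Or.inl h
  | p :: l, st, x, h => by
    rcases mem_foldl_bracketStep i l _ h with h | h
    · rcases mem_bracketStep h with rfl | h
      · exact Or.inr List.mem_cons_self
      · exact Or.inl h
    · exact Or.inr (List.mem_cons_of_mem _ h)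

lemma ePos_eq_none_iff (i : ℕ) (w : List ℕ) :
    ePos i w = none ↔ w.foldl (unmatchedStep i) 0 = 0 := by
  rw [ePos, List.getLast?_eq_none_iff, ← List.length_eq_zero_iff, bracketScan_eq_foldl,
    length_foldl_bracketStep]
  simp [List.map_map, Function.comp_def, List.zipIdx_map_fst]

lemma ePos_lt_length {i p : ℕ} {w : List ℕ} (h : ePos i w = some p) : p < w.length := by
  rcases mem_foldl_bracketStep i _ _ (List.mem_of_mem_getLast? h) with h | h
  · simp at h
  · simpa [List.map_map, Function.comp_def, List.zipIdx_map_snd] using h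

lemma bind_getElem?_map_eq_none_iff {α β : Type*} {i : ℕ} {w : List ℕ} (cells : List α)
    (g : α → β) (hlen : cells.length = w.length) :
    ((ePos i w).bind fun p => (cells[p]?).map g) = none ↔ ePos i w = none := by
  rcases hp : ePos i w with _ | p
  · simp
  · have := ePos_lt_length hp
    simp [List.getElem?_eq_getElem (hlen ▸ this : p < cells.length)]

lemma foldl_unmatchedStep_replicate (i x k c : ℕ) :
    (List.replicate k x).foldl (unmatchedStep i) c =
      if x = i + 1 then c + k else if x = i then c - k else c := by
  induction k generalizing c with
  | zero => simp
  | succ k ih =>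
    rw [List.replicate_succ, List.foldl_cons, ih]
    unfold unmatchedStep
    split_ifs <;> omega

lemma foldl_unmatchedStep_column (P : ℕ → ℕ) (r c : ℕ) :
    ∀ K, ((List.range K).flatMap fun a => List.replicate (P a) (a + 1)).foldl
        (unmatchedStep (r + 1)) c =
      c - (if r < K then P r else 0) + (if r + 1 < K then P (r + 1) else 0)
  | 0 => by simp
  | K + 1 => by
    rw [List.range_succ, List.flatMap_append, List.foldl_append,
      foldl_unmatchedStep_column P r c K, List.flatMap_singleton, foldl_unmatchedStep_replicate]
    split_ifs <;> simp only [Nat.add_right_cancel_iff] at * <;> subst_vars <;> omega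

def tailSum (f : ℕ → ℕ) (N k : ℕ) : ℕ := ∑ x ∈ range N, f (k + x)

section tailSum

variable {f : ℕ → ℕ} {N : ℕ}

lemma tailSum_eq_zero (hf : ∀ x, N ≤ x → f x = 0) {k : ℕ} (hk : N ≤ k) : tailSum f N k = 0 :=
  sum_eq_zero fun x _ => hf _ (by omega)

lemma tailSum_eq_add (hf : ∀ x, N ≤ x → f x = 0) (k : ℕ) :
    tailSum f N k = f k + tailSum f N (k + 1) := by
  have h := sum_range_succ' (fun x => f (k + x)) N
  rw [sum_range_succ, hf _ (by omega)] at h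
  simp only [tailSum, add_zero, Nat.add_assoc, Nat.add_comm 1] at h ⊢
  omega

lemma tailSum_of_le {p : ℕ} (hf : ∀ x, p ≤ x → f x = 0) (hpN : p ≤ N) (k : ℕ) :
    tailSum f N k = tailSum f p k :=
  (sum_subset (range_subset_range.mpr hpN) fun x _ hx => hf _ (by simp at hx; omega)).symm

end tailSum

/-- The unmatched-`(` counter over a word made of blocks `x = k, …, N - 1`, block `x` consisting
of `a x` letters `)` followed by `b x` letters `(`. -/
lemma foldl_range'_tsub_add_eq_zero_iff {a b : ℕ → ℕ} {N : ℕ} (ha : ∀ x, N ≤ x → a x = 0)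
    (hb : ∀ x, N ≤ x → b x = 0) :
    ∀ len k c, k + len = N →
      ((List.range' k len).foldl (fun c x => c - a x + b x) c = 0 ↔
        (∀ t, k ≤ t → tailSum b N t ≤ tailSum a N (t + 1)) ∧
          c + tailSum b N k ≤ tailSum a N k)
  | 0, k, c, hk => by
    have hb' : ∀ t, k ≤ t → tailSum b N t = 0 := fun t ht => tailSum_eq_zero hb (by omega)
    simp only [List.range'_zero, List.foldl_nil, hb' k le_rfl,
      tailSum_eq_zero ha (by omega : N ≤ k)]
    exact ⟨fun h => ⟨fun t ht => by rw [hb' t ht]; omega, by omega⟩, fun h => by omega⟩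
  | len + 1, k, c, hk => by
    have hsplit : (∀ t, k ≤ t → tailSum b N t ≤ tailSum a N (t + 1)) ↔
        tailSum b N k ≤ tailSum a N (k + 1) ∧
          ∀ t, k + 1 ≤ t → tailSum b N t ≤ tailSum a N (t + 1) :=
      ⟨fun h => ⟨h k le_rfl, fun t ht => h t (by omega)⟩,
        fun h t ht => ht.eq_or_lt.elim (fun e => e ▸ h.1) (fun ht => h.2 t ht)⟩
    rw [List.range'_succ, List.foldl_cons,
      foldl_range'_tsub_add_eq_zero_iff ha hb len (k + 1) _ (by omega), hsplit,
      tailSum_eq_add ha k, tailSum_eq_add hb k]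
    constructor
    · rintro ⟨h, hc⟩
      exact ⟨⟨by omega, h⟩, by omega⟩
    · rintro ⟨⟨hk, h⟩, hc⟩
      exact ⟨h, by omega⟩

lemma foldl_range_tsub_add_eq_zero_iff {a b : ℕ → ℕ} {N : ℕ} (ha : ∀ x, N ≤ x → a x = 0)
    (hb : ∀ x, N ≤ x → b x = 0) :
    (List.range N).foldl (fun c x => c - a x + b x) 0 = 0 ↔
      ∀ t, tailSum b N t ≤ tailSum a N (t + 1) := by
  rw [List.range_eq_range', foldl_range'_tsub_add_eq_zero_iff ha hb N 0 0 (zero_add N)]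
  refine ⟨fun h t => h.1 t t.zero_le, fun h => ⟨fun t _ => h t, ?_⟩⟩
  have := h 0
  rw [tailSum_eq_add ha 0] at *
  omega

/-- The lattice-word condition on the row word of `f`: every `(` coming from row `i + 1` is
matched by a `)` from row `i` further right. -/
def IsRowLattice (f : ℕ → ℕ → ℕ) (n : ℕ) : Prop :=
  ∀ i j, tailSum (f (i + 1)) n j ≤ tailSum (f i) n (j + 1)

def cornerSum (f : ℕ → ℕ → ℕ) (m n i j : ℕ) : ℕ := tailSum (fun x => tailSum (f x) n j) m i

section cornerSum

variable {f : ℕ → ℕ → ℕ} {m n : ℕ}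

lemma cornerSum_swap (i j : ℕ) : cornerSum (Function.swap f) n m j i = cornerSum f m n i j := by
  simp only [cornerSum, tailSum]
  exact sum_comm

lemma cornerSum_succ_le_of_isRowLattice (h : IsRowLattice f n) (i j : ℕ) :
    cornerSum f m n (i + 1) j ≤ cornerSum f m n i (j + 1) :=
  show tailSum _ m (i + 1) ≤ tailSum _ m i from
    sum_le_sum fun x _ => by simpa only [Nat.add_right_comm] using h (i + x) j

lemma cornerSum_add_cornerSum (hm : ∀ i j, m ≤ i → f i j = 0) (hn : ∀ i j, n ≤ j → f i j = 0)
    (i j : ℕ) :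
    cornerSum f m n i j + cornerSum f m n (i + 1) (j + 1) =
      f i j + cornerSum f m n (i + 1) j + cornerSum f m n i (j + 1) := by
  have hrow : ∀ j x, m ≤ x → tailSum (f x) n j = 0 := fun j x hx =>
    sum_eq_zero fun y _ => hm x _ hx
  simp only [cornerSum, tailSum_eq_add (hrow j) i, tailSum_eq_add (hrow (j + 1)) i,
    tailSum_eq_add (hn i) j]
  omega

theorem isRowLattice_and_isRowLattice_swap_iff (hm : ∀ i j, m ≤ i → f i j = 0)
    (hn : ∀ i j, n ≤ j → f i j = 0) :
    IsRowLattice f n ∧ IsRowLattice (Function.swap f) m ↔ ∀ i j, f (i + 1) j = f i (j + 1) := by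
  constructor
  · rintro ⟨hrow, hcol⟩ i j
    have hQ : ∀ i j, cornerSum f m n (i + 1) j = cornerSum f m n i (j + 1) := fun i j =>
      le_antisymm (cornerSum_succ_le_of_isRowLattice hrow i j)
        (by simpa only [cornerSum_swap] using cornerSum_succ_le_of_isRowLattice hcol j i)
    linarith [cornerSum_add_cornerSum hm hn (i + 1) j, cornerSum_add_cornerSum hm hn i (j + 1),
      hQ i j, hQ (i + 1) j, hQ i (j + 1), hQ (i + 1) (j + 1)]
  · intro h
    refine ⟨fun i j => le_of_eq (sum_congr rfl fun x _ => ?_),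
      fun i j => le_of_eq (sum_congr rfl fun x _ => ?_)⟩
    · rw [h, Nat.add_right_comm]
    · simp only [Function.swap, ← h, Nat.add_right_comm]

end cornerSum

section antidiagonal

variable {f : ℕ → ℕ → ℕ}

lemma eq_of_antidiagonal (h : ∀ i j, f (i + 1) j = f i (j + 1)) :
    ∀ i j, f i j = f 0 (i + j)
  | 0, j => by rw [zero_add]
  | i + 1, j => by rw [h, eq_of_antidiagonal h i, Nat.add_right_comm, Nat.add_assoc]

lemma antidiagonal_eq_zero {m n : ℕ} (hm : ∀ i j, m ≤ i → f i j = 0)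
    (hn : ∀ i j, n ≤ j → f i j = 0) (h : ∀ i j, f (i + 1) j = f i (j + 1)) {t : ℕ}
    (ht : min m n ≤ t) : f 0 t = 0 := by
  rcases min_le_iff.mp ht with ht | ht
  · rw [← add_zero t, ← eq_of_antidiagonal h]; exact hm t 0 ht
  · exact hn 0 t ht

lemma tailSum_row_of_antidiagonal {m n : ℕ} (hm : ∀ i j, m ≤ i → f i j = 0)
    (hn : ∀ i j, n ≤ j → f i j = 0) (h : ∀ i j, f (i + 1) j = f i (j + 1)) (k : ℕ) :
    tailSum (f k) n 0 = tailSum (f 0) (min m n) k := by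
  rw [← tailSum_of_le (fun t => antidiagonal_eq_zero hm hn h) (min_le_right m n)]
  simp only [tailSum, zero_add, eq_of_antidiagonal h k]

lemma tailSum_col_of_antidiagonal {m n : ℕ} (hm : ∀ i j, m ≤ i → f i j = 0)
    (hn : ∀ i j, n ≤ j → f i j = 0) (h : ∀ i j, f (i + 1) j = f i (j + 1)) (k : ℕ) :
    tailSum (fun x => f x k) m 0 = tailSum (f 0) (min m n) k := by
  rw [← tailSum_of_le (fun t => antidiagonal_eq_zero hm hn h) (min_le_left m n)]
  simp only [tailSum, zero_add, eq_of_antidiagonal h _ k, Nat.add_comm _ k]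

end antidiagonal

variable {m n : ℕ}

def entOrZero (M : Matrix (Fin m) (Fin n) ℕ) (i j : ℕ) : ℕ :=
  if h : i < m ∧ j < n then M ⟨i, h.1⟩ ⟨j, h.2⟩ else 0

section matrix

variable (M : Matrix (Fin m) (Fin n) ℕ)

lemma entOrZero_of_le_left (i j : ℕ) (hi : m ≤ i) : entOrZero M i j = 0 :=
  dif_neg fun h => by omega

lemma entOrZero_of_le_right (i j : ℕ) (hj : n ≤ j) : entOrZero M i j = 0 :=
  dif_neg fun h => by omega

lemma entOrZero_fin (i : Fin m) (j : Fin n) : entOrZero M i j = M i j :=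
  dif_pos ⟨i.isLt, j.isLt⟩

lemma entOrZero_transpose : entOrZero Mᵀ = Function.swap (entOrZero M) := by
  ext i j
  simp only [entOrZero, Function.swap, Matrix.transpose_apply, and_comm]

lemma length_rowCells : (rowCells M).length = (rowWord M).length := by
  simp [rowCells, rowWord, List.length_flatMap]

lemma length_colCells : (colCells M).length = (colWord M).length := by
  simp [colCells, colWord, List.length_flatMap]

lemma eRow_eq_none_iff (i : ℕ) : eRow i M = none ↔ ePos i (rowWord M) = none :=
  bind_getElem?_map_eq_none_iff _ _ (length_rowCells M)

lemma eCol_eq_none_iff (j : ℕ) : eCol j M = none ↔ ePos j (rowWord Mᵀ) = none :=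
  bind_getElem?_map_eq_none_iff _ _ (length_colCells M)

lemma rowWord_eq_flatMap_range : rowWord M = (List.range n).flatMap fun j =>
    (List.range m).flatMap fun i => List.replicate (entOrZero M i j) (i + 1) := by
  simp only [rowWord, ← List.map_coe_finRange_eq_range, List.flatMap_map, entOrZero_fin]

end matrix

lemma foldl_rowWord (M : Matrix (Fin m) (Fin n) ℕ) {r : ℕ} (hr : r + 1 < m) :
    (rowWord M).foldl (unmatchedStep (r + 1)) 0 =
      (List.range n).foldl (fun c x => c - entOrZero M r x + entOrZero M (r + 1) x) 0 := by
  rw [rowWord_eq_flatMap_range, List.foldl_flatMap]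
  refine List.foldl_ext _ _ _ fun c x _ => ?_
  rw [foldl_unmatchedStep_column, if_pos (by omega), if_pos hr]

lemma ePos_rowWord_eq_none_iff (M : Matrix (Fin m) (Fin n) ℕ) {r : ℕ} (hr : r + 1 < m) :
    ePos (r + 1) (rowWord M) = none ↔
      ∀ k, tailSum (entOrZero M (r + 1)) n k ≤ tailSum (entOrZero M r) n (k + 1) := by
  rw [ePos_eq_none_iff, foldl_rowWord M hr]
  exact foldl_range_tsub_add_eq_zero_iff (entOrZero_of_le_right M r)
    (entOrZero_of_le_right M (r + 1))

lemma isRowLattice_entOrZero_iff (M : Matrix (Fin m) (Fin n) ℕ) :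
    IsRowLattice (entOrZero M) n ↔ ∀ i, 1 ≤ i → i < m → ePos i (rowWord M) = none := by
  constructor
  · intro h i hi him
    obtain ⟨r, rfl⟩ := Nat.exists_eq_add_of_le' hi
    exact (ePos_rowWord_eq_none_iff M him).mpr (h r)
  · intro h r k
    by_cases hr : r + 1 < m
    · exact (ePos_rowWord_eq_none_iff M hr).mp (h (r + 1) (Nat.le_add_left 1 r) hr) k
    · rw [show tailSum (entOrZero M (r + 1)) n k = 0 from
        sum_eq_zero fun x _ => entOrZero_of_le_left M _ _ (by omega)]
      exact Nat.zero_le _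

theorem isHighest_iff_antidiagonal (M : Matrix (Fin m) (Fin n) ℕ) :
    ((∀ i, 1 ≤ i → i < m → eRow i M = none) ∧ (∀ j, 1 ≤ j → j < n → eCol j M = none)) ↔
      ∀ i j, entOrZero M (i + 1) j = entOrZero M i (j + 1) := by
  simp only [eRow_eq_none_iff, eCol_eq_none_iff, ← isRowLattice_entOrZero_iff,
    entOrZero_transpose]
  exact isRowLattice_and_isRowLattice_swap_iff (entOrZero_of_le_left M) (entOrZero_of_le_right M)

lemma exists_antidiagonal_form_iff (M : Matrix (Fin m) (Fin n) ℕ) :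
    (∃ a : ℕ → ℕ, ∀ (i : Fin m) (j : Fin n),
      M i j = if (i : ℕ) + (j : ℕ) + 1 ≤ min m n then a ((i : ℕ) + (j : ℕ) + 1) else 0) ↔
      ∀ i j, entOrZero M (i + 1) j = entOrZero M i (j + 1) := by
  constructor
  · rintro ⟨a, ha⟩
    have hE : ∀ i j, entOrZero M i j = if i + j + 1 ≤ min m n then a (i + j + 1) else 0 := by
      intro i j
      unfold entOrZero
      split_ifs with h h' h'
      · exact (ha ⟨i, h.1⟩ ⟨j, h.2⟩).trans (if_pos h')
      · exact (ha ⟨i, h.1⟩ ⟨j, h.2⟩).trans (if_neg h')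
      · omega
      · rfl
    intro i j
    simp only [hE, Nat.add_right_comm i 1 j, Nat.add_assoc i j 1]
  · intro h
    refine ⟨fun t => entOrZero M 0 (t - 1), fun i j => ?_⟩
    rw [← entOrZero_fin M i j, eq_of_antidiagonal h]
    split_ifs with hij
    · rfl
    · exact antidiagonal_eq_zero (entOrZero_of_le_left M) (entOrZero_of_le_right M) h
        (by omega)

lemma rowSum_eq_tailSum (M : Matrix (Fin m) (Fin n) ℕ) (k : ℕ) :
    (if h : k < m then ∑ j, M ⟨k, h⟩ j else 0) = tailSum (entOrZero M k) n 0 := by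
  split_ifs with h
  · simp only [tailSum, zero_add, ← Fin.sum_univ_eq_sum_range (entOrZero M k) n]
    exact sum_congr rfl fun j _ => (entOrZero_fin M ⟨k, h⟩ j).symm
  · exact (sum_eq_zero fun x _ => entOrZero_of_le_left M _ _ (by omega)).symm

lemma colSum_eq_tailSum (M : Matrix (Fin m) (Fin n) ℕ) (k : ℕ) :
    (if h : k < n then ∑ i, M i ⟨k, h⟩ else 0) = tailSum (fun x => entOrZero M x k) m 0 := by
  have h := rowSum_eq_tailSum Mᵀ k
  rw [entOrZero_transpose] at h
  exact h

/-- A matrix `M ∈ Mat_{m,n}(ℤ≥0)` is a highest-weight vertex of the full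
matrix bicrystal iff its entries are constant along initial antidiagonals and vanish beyond
the `min(m,n)`-th antidiagonal; in particular for highest-weight `M` the row-sum sequence
equals the column-sum sequence and is a partition with at most `min(m,n)` parts. -/
theorem highest_weight_matrix_characterization (m n : ℕ)
    (M : Matrix (Fin m) (Fin n) ℕ) :
    (((∀ i, 1 ≤ i → i < m → eRow i M = none) ∧
      (∀ j, 1 ≤ j → j < n → eCol j M = none)) ↔
      ∃ a : ℕ → ℕ, ∀ (i : Fin m) (j : Fin n),
        M i j = if (i : ℕ) + (j : ℕ) + 1 ≤ min m n then a ((i : ℕ) + (j : ℕ) + 1) else 0) ∧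
    (((∀ i, 1 ≤ i → i < m → eRow i M = none) ∧
      (∀ j, 1 ≤ j → j < n → eCol j M = none)) →
      ((∀ k : ℕ, (if h : k < m then ∑ j, M ⟨k, h⟩ j else 0) =
          (if h : k < n then ∑ i, M i ⟨k, h⟩ else 0)) ∧
       (∀ k : ℕ, (if h : k + 1 < m then ∑ j, M ⟨k + 1, h⟩ j else 0) ≤
          (if h : k < m then ∑ j, M ⟨k, h⟩ j else 0)) ∧
       (∀ k : ℕ, min m n ≤ k → (if h : k < m then ∑ j, M ⟨k, h⟩ j else 0) = 0))) := by
  refine ⟨(isHighest_iff_antidiagonal M).trans (exists_antidiagonal_form_iff M).symm,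
    fun hM => ?_⟩
  have h := (isHighest_iff_antidiagonal M).mp hM
  have hm := entOrZero_of_le_left M
  have hn := entOrZero_of_le_right M
  have hg : ∀ t, min m n ≤ t → entOrZero M 0 t = 0 := fun _ => antidiagonal_eq_zero hm hn h
  have hrow : ∀ k, (if h : k < m then ∑ j, M ⟨k, h⟩ j else 0) =
      tailSum (entOrZero M 0) (min m n) k := fun k => by
    rw [rowSum_eq_tailSum, tailSum_row_of_antidiagonal hm hn h]
  refine ⟨fun k => ?_, fun k => ?_, fun k hk => ?_⟩
  · rw [hrow, colSum_eq_tailSum, tailSum_col_of_antidiagonal hm hn h]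
  · rw [hrow, hrow, tailSum_eq_add hg k]
    exact Nat.le_add_left _ _
  · rw [hrow, tailSum_eq_zero hg hk]

end FilteredRSK
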